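/- arXiv:1607.07814 — 7 statements merged into one kernel-verified Lean document; each statement's English description precedes it below -/
import Mathlib

section
/- Every simplicial complex is a Minkowski complex: for any simplicial complex Δ on [n] there exist a dimension D, axis-parallel boxes P_1,...,P_n in R^D each containing 0, and a point μ ∈ R^D, such that Δ = Δ(P;μ) = {σ ⊆ [n] : μ ∉ Σ_{i∈σ} P_i}. -/
open scoped Pointwise

lemma pi_add_pi {ι : Type*} (A B : ι → Set ℝ) :
    Set.univ.pi A + Set.univ.pi B = Set.univ.pi (fun j => A j + B j) := by
  ext x
  constructor
  · rintro ⟨a, ha, b, hb, rfl⟩ j _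
    exact ⟨a j, ha j trivial, b j, hb j trivial, rfl⟩
  · intro h
    choose a ha b hb hab using fun j => h j trivial
    exact ⟨a, fun j _ => ha j, b, fun j _ => hb j, funext hab⟩

lemma sum_box {n D : ℕ} (σ : Finset (Fin n)) (t : Fin n → Fin D → ℝ)
    (ht : ∀ i j, 0 ≤ t i j) :
    ∑ i ∈ σ, Set.univ.pi (fun j => Set.Icc (0 : ℝ) (t i j)) =
      Set.univ.pi (fun j => Set.Icc (0 : ℝ) (∑ i ∈ σ, t i j)) := by
  induction σ using Finset.induction_on with
  | empty =>
    simp only [Finset.sum_empty]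
    ext x
    simp [funext_iff, Set.mem_zero]
  | @insert a s ha ih =>
    rw [Finset.sum_insert ha, ih, pi_add_pi]
    have key : ∀ j, Set.Icc (0:ℝ) (t a j) + Set.Icc 0 (∑ i ∈ s, t i j) =
        Set.Icc 0 (∑ i ∈ insert a s, t i j) := fun j => by
      rw [Set.Icc_add_Icc (ht a j) (Finset.sum_nonneg fun i _ => ht i j),
        zero_add, Finset.sum_insert ha]
    simp only [key]

/-- every simplicial complex on [n] is a Minkowski complex:
there are a dimension D, axis-parallel boxes P_i = ∏_j [0, t i j] ⊆ ℝ^D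
(each containing 0) and a point μ with Δ = Δ(P;μ). -/
theorem every_complex_is_minkowski (n : ℕ) (Δ : Set (Finset (Fin n)))
    (hΔ : ∀ σ ∈ Δ, ∀ τ, τ ⊆ σ → τ ∈ Δ) :
    ∃ (D : ℕ) (t : Fin n → Fin D → ℝ) (μ : Fin D → ℝ),
      (∀ i j, 0 ≤ t i j) ∧
      ∀ σ : Finset (Fin n),
        σ ∈ Δ ↔ μ ∉ ∑ i ∈ σ, Set.univ.pi (fun j => Set.Icc (0 : ℝ) (t i j)) := by
  classical
  have hcard : Fintype.card (Finset (Fin n)) = 2 ^ n := by simp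
  let e : Finset (Fin n) ≃ Fin (2 ^ n) := Fintype.equivFinOfCardEq hcard
  refine ⟨2 ^ n,
    fun i j => if e.symm j ∈ Δ ∧ i ∉ e.symm j then 1 else 0,
    fun j => if e.symm j ∈ Δ then 1/2 else 0,
    fun i j => by positivity, fun σ => ?_⟩
  rw [sum_box _ _ (fun i j => by positivity)]
  have hsum : ∀ j : Fin (2 ^ n),
      (∑ i ∈ σ, if e.symm j ∈ Δ ∧ i ∉ e.symm j then (1 : ℝ) else 0) =
        if e.symm j ∈ Δ then ((σ \ e.symm j).card : ℝ) else 0 := by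
    intro j
    by_cases h : e.symm j ∈ Δ
    · simp only [h, true_and, if_true]
      rw [Finset.sum_boole, Finset.sdiff_eq_filter]
    · simp [h]
  constructor
  · intro hσ hmem
    have h2 := hmem (e σ) trivial
    simp only [Equiv.symm_apply_apply] at h2
    have h0 : (∑ x ∈ σ, if σ ∈ Δ ∧ x ∉ σ then (1:ℝ) else 0) = 0 :=
      Finset.sum_eq_zero fun x hx => by simp [hx]
    rw [if_pos hσ, h0] at h2
    norm_num [Set.mem_Icc] at h2
  · intro hmem
    by_contra hσ
    apply hmem
    intro j _
    dsimp only
    rw [hsum j]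
    by_cases h : e.symm j ∈ Δ
    · rw [if_pos h, if_pos h]
      have hns : ¬ σ ⊆ e.symm j := fun hsub => hσ (hΔ _ h _ hsub)
      have : (σ \ e.symm j).Nonempty := by
        rw [Finset.sdiff_nonempty]; exact hns
      have h1 : 1 ≤ (σ \ e.symm j).card := Finset.card_pos.mpr this
      constructor
      · norm_num
      · calc (1:ℝ)/2 ≤ 1 := by norm_num
          _ ≤ _ := by exact_mod_cast h1
    · rw [if_neg h, if_neg h]; simp
end

section
/- Explicit box realization: let Δ be a simplicial complex on [n] with facets σ_1,...,σ_D. For each i and j set t_{ij} = 1 if i ∈ σ_j and t_{ij} = |σ_j|+1 otherwise; let P_i = {p ∈ R^D : 0 ≤ p_j ≤ t_{ij}} and μ = (|σ_1|+1, ..., |σ_D|+1). Then for every σ ⊆ [n]: σ ∈ Δ if and only if μ ∉ Σ_{i∈σ} P_i. -/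
open scoped Pointwise

lemma mem_finsetSum_iff {α β : Type*} [DecidableEq α] [AddCommMonoid β]
    (S : Finset α) (A : α → Set β) (x : β) :
    x ∈ ∑ i ∈ S, A i ↔ ∃ f : α → β, (∀ i ∈ S, f i ∈ A i) ∧ ∑ i ∈ S, f i = x := by
  induction S using Finset.induction generalizing x with
  | empty => simp [Set.mem_zero, eq_comm]
  | @insert a S ha ih =>
    rw [Finset.sum_insert ha]
    constructor
    · rintro ⟨y, hy, z, hz, rfl⟩
      obtain ⟨f, hf, rfl⟩ := (ih z).1 hz
      refine ⟨Function.update f a y, ?_, ?_⟩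
      · intro i hi
        rcases Finset.mem_insert.1 hi with rfl | hi'
        · simp [hy]
        · rw [Function.update_of_ne (by rintro rfl; exact ha hi')]; exact hf i hi'
      · rw [Finset.sum_insert ha, Function.update_self]
        congr 1
        exact Finset.sum_congr rfl fun i hi => Function.update_of_ne (by rintro rfl; exact ha hi) _ _
    · rintro ⟨f, hf, hsum⟩
      rw [Finset.sum_insert ha] at hsum
      exact ⟨f a, hf a (Finset.mem_insert_self a S), ∑ i ∈ S, f i,
        (ih _).2 ⟨f, fun i hi => hf i (Finset.mem_insert_of_mem hi), rfl⟩, hsum⟩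

lemma waterfill {α : Type*} [DecidableEq α] (S : Finset α) (t : α → ℝ)
    (ht : ∀ i ∈ S, 0 ≤ t i) (c : ℝ) (h0 : 0 ≤ c) (h1 : c ≤ ∑ i ∈ S, t i) :
    ∃ x : α → ℝ, (∀ i ∈ S, x i ∈ Set.Icc 0 (t i)) ∧ ∑ i ∈ S, x i = c := by
  induction S using Finset.induction generalizing c with
  | empty => simp at h1; exact ⟨0, by simp, by simpa using (le_antisymm h1 h0).symm⟩
  | @insert a S ha ih =>
    rw [Finset.sum_insert ha] at h1
    have hta : 0 ≤ t a := ht a (Finset.mem_insert_self a S)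
    obtain ⟨x, hx, hsum⟩ := ih (fun i hi => ht i (Finset.mem_insert_of_mem hi))
      (c - min (t a) c) (by simp [sub_nonneg, min_le_right])
      (by rcases min_cases (t a) c with ⟨h, _⟩ | ⟨h, _⟩ <;> rw [h]
          · linarith
          · simpa using Finset.sum_nonneg fun i hi => ht i (Finset.mem_insert_of_mem hi))
    refine ⟨Function.update x a (min (t a) c), ?_, ?_⟩
    · intro i hi
      rcases Finset.mem_insert.1 hi with rfl | hi'
      · simp [le_min_iff, hta, h0, min_le_left]
      · rw [Function.update_of_ne (by rintro rfl; exact ha hi')]; exact hx i hi'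
    · have heq : ∑ i ∈ S, Function.update x a (min (t a) c) i = ∑ i ∈ S, x i :=
        Finset.sum_congr rfl fun i hi => Function.update_of_ne (by rintro rfl; exact ha hi) _ _
      rw [Finset.sum_insert ha, Function.update_self, heq, hsum]
      ring

/-- explicit box realization.  Let Δ be a simplicial complex on [n]
whose facets are σ_1, …, σ_D.  With t i j = 1 if i ∈ σ j and |σ j| + 1 otherwise,
P i = ∏_j [0, t i j] and μ = (|σ_1|+1, …, |σ_D|+1), one has
σ ∈ Δ ↔ μ ∉ ∑_{i∈σ} P_i for every σ ⊆ [n]. -/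
theorem explicit_box_realization (n D : ℕ) (Δ : Set (Finset (Fin n)))
    (hΔ : ∀ σ ∈ Δ, ∀ τ, τ ⊆ σ → τ ∈ Δ)
    (σ : Fin D → Finset (Fin n))
    (hmem : ∀ j, σ j ∈ Δ)
    (hmax : ∀ j, ∀ τ ∈ Δ, σ j ⊆ τ → τ = σ j)
    (hcover : ∀ τ ∈ Δ, ∃ j, τ ⊆ σ j)
    (t : Fin n → Fin D → ℝ)
    (ht : ∀ i j, t i j = if i ∈ σ j then 1 else (σ j).card + 1)
    (μ : Fin D → ℝ) (hμ : ∀ j, μ j = (σ j).card + 1) :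
    ∀ τ : Finset (Fin n),
      τ ∈ Δ ↔ μ ∉ ∑ i ∈ τ, Set.univ.pi (fun j => Set.Icc (0 : ℝ) (t i j)) := by
  intro τ
  have htnn : ∀ i j, 0 ≤ t i j := by intro i j; rw [ht]; split <;> positivity
  have hμnn : ∀ j, 0 ≤ μ j := by intro j; rw [hμ]; positivity
  have hmemiff : μ ∈ ∑ i ∈ τ, Set.univ.pi (fun j => Set.Icc (0:ℝ) (t i j)) ↔
      ∀ j, μ j ≤ ∑ i ∈ τ, t i j := by
    rw [mem_finsetSum_iff]
    constructor
    · rintro ⟨f, hf, hsum⟩ j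
      have h2 := congrFun hsum j
      rw [Finset.sum_apply] at h2
      rw [← h2]
      exact Finset.sum_le_sum fun i hi => ((Set.mem_univ_pi.1 (hf i hi)) j).2
    · intro h
      choose x hx hxs using fun j =>
        waterfill τ (fun i => t i j) (fun i _ => htnn i j) (μ j) (hμnn j) (h j)
      refine ⟨fun i j => x j i, fun i hi => ?_, ?_⟩
      · rw [Set.mem_univ_pi]
        intro j
        exact ⟨(hx j i hi).1, (hx j i hi).2⟩
      · funext j
        rw [Finset.sum_apply]
        exact hxs j
  constructor
  · intro hτ hcontra
    obtain ⟨j, hsub⟩ := hcover τ hτ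
    have hle := hmemiff.1 hcontra j
    have hsum : ∑ i ∈ τ, t i j = τ.card := by
      have h1 : ∀ i ∈ τ, t i j = 1 := fun i hi => by
        rw [ht, if_pos (hsub hi)]; norm_num
      rw [Finset.sum_congr rfl h1]; simp
    rw [hsum, hμ j] at hle
    have hcard : τ.card ≤ (σ j).card := Finset.card_le_card hsub
    have : (τ.card : ℝ) ≤ (σ j).card := by exact_mod_cast hcard
    linarith
  · intro hnot
    by_contra hτ
    apply hnot
    rw [hmemiff]
    intro j
    have hns : ¬ τ ⊆ σ j := fun hsub => hτ (hΔ (σ j) (hmem j) τ hsub)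
    obtain ⟨i0, hi0, hni0⟩ := Finset.not_subset.1 hns
    calc μ j ≤ t i0 j := by rw [hμ, ht]; simp [hni0]
      _ ≤ ∑ i ∈ τ, t i j := Finset.single_le_sum (fun i _ => htnn i j) hi0
end

section
/- Backward direction of box realization: with Δ, t_{ij}, P_i, μ as in the explicit box construction, if τ ⊆ [n] is not a face of Δ, then μ ∈ Σ_{i∈τ} P_i; equivalently, for every facet index j one has Σ_{i∈τ} t_{ij} ≥ |σ_j|+1. -/
open scoped Pointwise

/-- backward direction of the box realization: if τ ∉ Δ then
μ ∈ ∑_{i∈τ} P_i; equivalently, ∑_{i∈τ} t i j ≥ |σ j| + 1 for every facet index j. -/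
theorem box_realization_backward (n D : ℕ) (Δ : Set (Finset (Fin n)))
    (hΔ : ∀ σ ∈ Δ, ∀ τ, τ ⊆ σ → τ ∈ Δ)
    (σ : Fin D → Finset (Fin n))
    (hmem : ∀ j, σ j ∈ Δ)
    (hmax : ∀ j, ∀ τ ∈ Δ, σ j ⊆ τ → τ = σ j)
    (hcover : ∀ τ ∈ Δ, ∃ j, τ ⊆ σ j)
    (t : Fin n → Fin D → ℝ)
    (ht : ∀ i j, t i j = if i ∈ σ j then 1 else (σ j).card + 1)
    (μ : Fin D → ℝ) (hμ : ∀ j, μ j = (σ j).card + 1)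
    (τ : Finset (Fin n)) (hτ : τ ∉ Δ) :
    μ ∈ (∑ i ∈ τ, Set.univ.pi (fun j => Set.Icc (0 : ℝ) (t i j))) ∧
    ∀ j, ((σ j).card + 1 : ℝ) ≤ ∑ i ∈ τ, t i j := by
  -- for each j, there is i ∈ τ with i ∉ σ j
  have hwit : ∀ j, ∃ i ∈ τ, i ∉ σ j := by
    intro j
    by_contra h
    push_neg at h
    exact hτ (hΔ (σ j) (hmem j) τ h)
  choose i0 hi0τ hi0σ using hwit
  have htnn : ∀ i j, (0 : ℝ) ≤ t i j := by
    intro i j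
    rw [ht]
    split <;> positivity
  have hti0 : ∀ j, t (i0 j) j = (σ j).card + 1 := by
    intro j
    rw [ht]
    simp [hi0σ j]
  constructor
  · set x : Fin n → Fin D → ℝ := fun i j => if i = i0 j then μ j else 0 with hx
    have hxmem : ∀ i ∈ τ, x i ∈ Set.univ.pi (fun j => Set.Icc (0 : ℝ) (t i j)) := by
      intro i _ j _
      simp only [hx]
      split
      · rename_i h
        subst h
        rw [hμ, hti0]
        exact ⟨by positivity, le_refl _⟩
      · exact ⟨le_refl _, htnn i j⟩
    have hsum : μ = ∑ i ∈ τ, x i := by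
      funext j
      have : (∑ i ∈ τ, x i) j = ∑ i ∈ τ, x i j := by
        simp [Finset.sum_apply]
      rw [this]
      simp only [hx]
      rw [Finset.sum_ite_eq' τ (i0 j) (fun _ => μ j)]
      simp [hi0τ j]
    exact (Set.mem_finset_sum τ _ μ).2 ⟨x, fun hi => hxmem _ hi, hsum.symm⟩
  · intro j
    calc ((σ j).card + 1 : ℝ) = t (i0 j) j := (hti0 j).symm
    _ ≤ ∑ i ∈ τ, t i j := Finset.single_le_sum (fun i _ => htnn i j) (hi0τ j)
end

section
/- Lines and joins lemma: let Δ = Δ(P;μ) be a Minkowski complex for convex sets P_1,...,P_n ⊆ R^d containing 0, and let σ, τ ∈ Δ with σ ∪ τ ∈ Δ. If v ∈ R^d \ {0} and s, t are reals with μ + s·v ∈ P_σ and μ + t·v ∈ P_τ, then s and t have the same sign (st > 0, in particular neither is 0). -/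
open scoped Pointwise

/-!
`P_σ` and `P_τ` lie in `P_{σ ∪ τ}` because every `P_i` contains `0`, and `P_{σ ∪ τ}` is convex.
The parameters `r` with `μ + r • v ∈ P_{σ ∪ τ}` therefore form an interval of `ℝ` containing
`s` and `t` but not `0`, so `s` and `t` lie on the same side of `0`.
-/

theorem Set.finsetSum_subset_finsetSum_of_zero_mem {ι α : Type*} [AddCommMonoid α]
    {f : ι → Set α} {A B : Finset ι} (hAB : A ⊆ B) (hf : ∀ i ∈ B, (0 : α) ∈ f i) :
    ∑ i ∈ A, f i ⊆ ∑ i ∈ B, f i := by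
  classical
  have h0 : (0 : α) ∈ ∑ i ∈ B \ A, f i := by
    simpa using Set.finsetSum_mem_finsetSum (B \ A) f 0 fun i hi => hf i (Finset.sdiff_subset hi)
  rw [← Finset.sum_sdiff hAB]
  exact Set.subset_add_right _ h0

theorem Convex.zero_lt_mul_of_add_smul_mem {E : Type*} [AddCommGroup E] [Module ℝ E]
    {C : Set E} (hC : Convex ℝ C) {μ v : E} (hμ : μ ∉ C) {s t : ℝ}
    (hs : μ + s • v ∈ C) (ht : μ + t • v ∈ C) : 0 < s * t := by
  by_contra! hst
  have hline : Convex ℝ (AffineMap.lineMap μ (μ + v) ⁻¹' C) := hC.affine_preimage _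
  have hmem : ∀ r : ℝ, r ∈ AffineMap.lineMap μ (μ + v) ⁻¹' C ↔ μ + r • v ∈ C := by
    simp [AffineMap.lineMap_apply, add_comm]
  have h0 : (0 : ℝ) ∈ Set.uIcc s t := by
    rcases mul_nonpos_iff.mp hst with ⟨hs0, ht0⟩ | ⟨hs0, ht0⟩
    · exact Set.mem_uIcc.mpr (Or.inr ⟨ht0, hs0⟩)
    · exact Set.mem_uIcc.mpr (Or.inl ⟨hs0, ht0⟩)
  have := hline.ordConnected.uIcc_subset ((hmem s).mpr hs) ((hmem t).mpr ht) h0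
  exact hμ (by simpa using (hmem 0).mp this)

theorem lines_and_joins_general (n d : ℕ) (P : Fin n → Set (Fin d → ℝ))
    (hconv : ∀ i, Convex ℝ (P i)) (h0 : ∀ i, (0 : Fin d → ℝ) ∈ P i)
    (μ : Fin d → ℝ) (σ τ : Finset (Fin n))
    (hστ : μ ∉ ∑ i ∈ σ ∪ τ, P i)
    (v : Fin d → ℝ) (s t : ℝ)
    (hs : μ + s • v ∈ ∑ i ∈ σ, P i) (ht : μ + t • v ∈ ∑ i ∈ τ, P i) :
    s * t > 0 := by
  have hsub : ∀ {A : Finset (Fin n)}, A ⊆ σ ∪ τ → ∑ i ∈ A, P i ⊆ ∑ i ∈ σ ∪ τ, P i :=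
    fun hA => Set.finsetSum_subset_finsetSum_of_zero_mem hA fun i _ => h0 i
  exact (convex_sum P fun i _ => hconv i).zero_lt_mul_of_add_smul_mem hστ
    (hsub Finset.subset_union_left hs) (hsub Finset.subset_union_right ht)

/-- lines and joins.  If σ, τ and σ ∪ τ are faces of the Minkowski
complex Δ(P;μ) and μ + s•v ∈ P_σ, μ + t•v ∈ P_τ for some nonzero v, then s and t
have the same (nonzero) sign. -/
theorem lines_and_joins (n d : ℕ) (P : Fin n → Set (Fin d → ℝ))
    (hconv : ∀ i, Convex ℝ (P i)) (h0 : ∀ i, (0 : Fin d → ℝ) ∈ P i)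
    (μ : Fin d → ℝ) (σ τ : Finset (Fin n))
    (hσ : μ ∉ ∑ i ∈ σ, P i) (hτ : μ ∉ ∑ i ∈ τ, P i)
    (hστ : μ ∉ ∑ i ∈ σ ∪ τ, P i)
    (v : Fin d → ℝ) (hv : v ≠ 0) (s t : ℝ)
    (hs : μ + s • v ∈ ∑ i ∈ σ, P i) (ht : μ + t • v ∈ ∑ i ∈ τ, P i) :
    s * t > 0 :=
  lines_and_joins_general n d P hconv h0 μ σ τ hστ v s t hs ht
end

section
/- Projection lemma: let Δ = Δ(P;μ) be a Minkowski complex for convex sets P_1,...,P_n ⊆ R^d containing 0, and suppose there is a line ℓ through μ that does not intersect P_σ for any σ ∈ Δ. Let π: R^d → R^{d-1} be the orthogonal projection along ℓ. Then Δ = Δ(π(P); π(μ)), i.e., for all σ ⊆ [n]: μ ∉ P_σ if and only if π(μ) ∉ π(P_σ). In particular, the convex threshold dimension of Δ is less than d. -/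
open scoped Pointwise

/-- A simplicial complex `Δ` on a finite vertex set `α` is realizable as a
Minkowski complex in dimension `d` if there are convex bodies (compact convex
sets) `P i ⊆ ℝ^d` containing `0` and a point `μ` with
`Δ = Δ(P;μ) = {σ : μ ∉ ∑_{i∈σ} P i}`. -/
def MinkowskiRealizable {α : Type*} [Fintype α] (d : ℕ) (Δ : Set (Finset α)) : Prop :=
  ∃ (P : α → Set (Fin d → ℝ)) (μ : Fin d → ℝ),
    (∀ i, Convex ℝ (P i)) ∧ (∀ i, IsCompact (P i)) ∧ (∀ i, (0 : Fin d → ℝ) ∈ P i) ∧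
    ∀ σ : Finset α, σ ∈ Δ ↔ μ ∉ ∑ i ∈ σ, P i

/-- The convex threshold dimension: the smallest dimension in which `Δ` is a
Minkowski complex. -/
noncomputable def ctd {α : Type*} [Fintype α] (Δ : Set (Finset α)) : ℕ :=
  sInf {d | MinkowskiRealizable d Δ}

/-! The line `μ + ℝ v` is the fibre of `π` over `π μ`, so `π μ ∈ π '' P_σ` means exactly that the
line meets `P_σ`, which by hypothesis happens only when `μ ∈ P_σ`. Since `π` is linear, `π P_σ`
is the Minkowski sum of the convex bodies `π P_i ∋ 0`, so the same complex is realized in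
dimension `d - 1`. -/

lemma notMem_iff_notMem_image_of_fiber_subset_line {R E F : Type*} [Add E] [SMul R E]
    {f : E → F} {S : Set E} {μ v : E} (hf : ∀ x, f x = f μ → ∃ t : R, x = μ + t • v)
    (hline : μ ∉ S → ∀ t : R, μ + t • v ∉ S) :
    μ ∉ S ↔ f μ ∉ f '' S := by
  refine ⟨fun hμ ⟨x, hx, hfx⟩ => ?_, fun h hμ => h ⟨μ, hμ, rfl⟩⟩
  obtain ⟨t, rfl⟩ := hf x hfx
  exact hline hμ t hx

lemma minkowskiRealizable_linearMap_image {α : Type*} [Fintype α] {d m : ℕ}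
    (P : α → Set (Fin d → ℝ)) (hconv : ∀ i, Convex ℝ (P i)) (hcpt : ∀ i, IsCompact (P i))
    (h0 : ∀ i, (0 : Fin d → ℝ) ∈ P i) (μ : Fin d → ℝ) (π : (Fin d → ℝ) →ₗ[ℝ] (Fin m → ℝ)) :
    MinkowskiRealizable m {σ : Finset α | π μ ∉ π '' (∑ i ∈ σ, P i)} := by
  refine ⟨fun i => π '' P i, π μ, fun i => (hconv i).linear_image π,
    fun i => (hcpt i).image π.continuous_of_finiteDimensional, fun i => ⟨0, h0 i, map_zero π⟩,
    fun σ => ?_⟩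
  rw [Set.mem_ofPred_eq, Set.image_finsetSum]

/-- projection lemma.  If the line ℓ = μ + ℝ·v misses P_σ for
every face σ of Δ = Δ(P;μ), and π is the orthogonal projection along ℓ
(a linear map to ℝ^{d-1} whose fiber over π(μ) is exactly ℓ), then
μ ∉ P_σ ↔ π(μ) ∉ π(P_σ) for all σ, so Δ = Δ(π(P); π(μ)); in particular
ctd(Δ) < d. -/
theorem projection_lemma (n d : ℕ) (P : Fin n → Set (Fin d → ℝ))
    (hconv : ∀ i, Convex ℝ (P i)) (hcpt : ∀ i, IsCompact (P i))
    (h0 : ∀ i, (0 : Fin d → ℝ) ∈ P i) (μ : Fin d → ℝ)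
    (v : Fin d → ℝ) (hv : v ≠ 0)
    (hline : ∀ σ : Finset (Fin n), μ ∉ ∑ i ∈ σ, P i →
      ∀ t : ℝ, μ + t • v ∉ ∑ i ∈ σ, P i)
    (π : (Fin d → ℝ) →ₗ[ℝ] (Fin (d - 1) → ℝ))
    (hπ : ∀ x : Fin d → ℝ, π x = π μ ↔ ∃ t : ℝ, x = μ + t • v) :
    (∀ σ : Finset (Fin n), μ ∉ ∑ i ∈ σ, P i ↔ π μ ∉ π '' (∑ i ∈ σ, P i)) ∧
    ctd {σ : Finset (Fin n) | μ ∉ ∑ i ∈ σ, P i} < d := by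
  have hproj : ∀ σ : Finset (Fin n), μ ∉ ∑ i ∈ σ, P i ↔ π μ ∉ π '' (∑ i ∈ σ, P i) := fun σ =>
    notMem_iff_notMem_image_of_fiber_subset_line (fun x => (hπ x).1) (hline σ)
  have hd : d ≠ 0 := by
    rintro rfl
    exact hv (Subsingleton.elim _ _)
  have hreal : MinkowskiRealizable (d - 1) {σ : Finset (Fin n) | μ ∉ ∑ i ∈ σ, P i} := by
    simpa only [hproj] using minkowskiRealizable_linearMap_image P hconv hcpt h0 μ π
  exact ⟨hproj, (Nat.sInf_le hreal).trans_lt (Nat.sub_one_lt hd)⟩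
end

section
/- No 1-dimensional realization of 2K_2-type configurations: there is no family of convex sets P_1, P_2, P_3, P_4 ⊆ R each containing 0 and μ ∈ R such that μ ∉ P_1 + P_2, μ ∉ P_3 + P_4, but μ ∈ P_1 + P_3 and μ ∈ P_2 + P_4. Equivalently, the graph 2K_2 (two disjoint edges, viewed as a simplicial complex) is not a threshold complex realizable as a Minkowski complex in R^1. -/
open scoped Pointwise

/-- Helper: if `μ` lies in the segment from 0 to `a+b`, with `a ∈ A`, `b ∈ B`
convex sets containing 0, then `μ ∈ A + B`. -/
lemma mem_add_of_mem_segment {A B : Set ℝ} (hA : Convex ℝ A) (hB : Convex ℝ B)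
    (h0A : (0:ℝ) ∈ A) (h0B : (0:ℝ) ∈ B) {a b μ : ℝ} (ha : a ∈ A) (hb : b ∈ B)
    (hμ : μ ∈ segment ℝ 0 (a + b)) : μ ∈ A + B := by
  rw [segment_eq_image] at hμ
  obtain ⟨θ, ⟨hθ0, hθ1⟩, hθ⟩ := hμ
  simp only [smul_eq_mul, mul_zero, zero_add] at hθ
  refine ⟨θ * a, ?_, θ * b, ?_, by rw [← hθ]; ring⟩
  · have := hA h0A ha (by linarith : (0:ℝ) ≤ 1 - θ) hθ0 (by ring)
    simpa using this
  · have := hB h0B hb (by linarith : (0:ℝ) ≤ 1 - θ) hθ0 (by ring)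
    simpa using this

/-- no 1-dimensional realization of a 2K₂-type configuration:
there are no convex sets P₁, P₂, P₃, P₄ ⊆ ℝ containing 0 and μ ∈ ℝ with
μ ∉ P₁ + P₂, μ ∉ P₃ + P₄, μ ∈ P₁ + P₃ and μ ∈ P₂ + P₄. -/
theorem no_one_dimensional_two_K_two (P : Fin 4 → Set ℝ)
    (hconv : ∀ i, Convex ℝ (P i)) (h0 : ∀ i, (0 : ℝ) ∈ P i) (μ : ℝ) :
    ¬ (μ ∉ P 0 + P 1 ∧ μ ∉ P 2 + P 3 ∧ μ ∈ P 0 + P 2 ∧ μ ∈ P 1 + P 3) := by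
  rintro ⟨h01, h23, h02, h13⟩
  obtain ⟨a, ha, c, hc, hac⟩ := h02
  obtain ⟨b, hb, d, hd, hbd⟩ := h13
  have hac' : a + c = μ := hac
  have hbd' : b + d = μ := hbd
  have key : μ ∈ Set.uIcc 0 (a + b) ∨ μ ∈ Set.uIcc 0 (c + d) := by
    simp only [Set.mem_uIcc]
    rcases le_total (a + b) (c + d) with h | h <;> rcases le_total μ 0 with h' | h' <;>
      [exact Or.inl (Or.inr ⟨by linarith, h'⟩);
       exact Or.inr (Or.inl ⟨h', by linarith⟩);
       exact Or.inr (Or.inr ⟨by linarith, h'⟩);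
       exact Or.inl (Or.inl ⟨h', by linarith⟩)]
  rcases key with h | h
  · exact h01 (mem_add_of_mem_segment (hconv 0) (hconv 1) (h0 0) (h0 1) ha hb
      (by rwa [segment_eq_uIcc]))
  · exact h23 (mem_add_of_mem_segment (hconv 2) (hconv 3) (h0 2) (h0 3) hc hd
      (by rwa [segment_eq_uIcc]))
end

section
/- For every d ≥ 0 there exists a simplicial complex Δ with convex threshold dimension ctd(Δ) ≥ d; for instance, the d-fold join of the graph 2K_2 (two disjoint edges) with itself has convex threshold dimension at least d. -/
open scoped Pointwise

/-!
Let `P` and `μ` realize the `D`-fold join of `2K₂`, and let `S k b` be the Minkowski sum of the two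
bodies on edge `b` of the `k`-th copy. The four cross pairs of a copy are non-faces, so
`μ + μ ∈ S k true + S k false`; hence no functional separates `μ` strictly from both, i.e. the open
convex cones `Ω k b` of functionals separating `μ` from `S k b` are disjoint, and a functional
`φ k` on the dual separates `Ω k true` from `Ω k false`. Every facet is a face, so for every
choice `χ` the cones `Ω k (χ k)` share a point: the `φ k` realize all sign patterns, hence are
linearly independent, and `D ≤ d`. Since `ctd` is an infimum, one also needs some realization at
all: boxes indexed by the faces give one for every simplicial complex.
-/

section MinkowskiSum

variable {ι E : Type*}

theorem Set.zero_mem_finsetSum [AddCommMonoid E] (s : Finset ι) {P : ι → Set E}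
    (h0 : ∀ i, (0 : E) ∈ P i) : (0 : E) ∈ ∑ i ∈ s, P i := by
  simpa using Set.finsetSum_mem_finsetSum s P 0 fun i _ => h0 i

theorem Set.finsetSum_subset_finsetSum_of_subset [AddCommMonoid E] [DecidableEq ι] {s t : Finset ι}
    (hst : s ⊆ t) {P : ι → Set E} (h0 : ∀ i, (0 : E) ∈ P i) : ∑ i ∈ s, P i ⊆ ∑ i ∈ t, P i := by
  rw [← Finset.sum_sdiff hst]
  intro x hx
  simpa using Set.add_mem_add (Set.zero_mem_finsetSum (t \ s) h0) hx

theorem IsCompact.finsetSum [AddCommMonoid E] [TopologicalSpace E] [ContinuousAdd E]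
    (s : Finset ι) {P : ι → Set E} (h : ∀ i ∈ s, IsCompact (P i)) : IsCompact (∑ i ∈ s, P i) :=
  Finset.sum_induction P IsCompact (fun _ _ => IsCompact.add) (by simp) h

end MinkowskiSum

section Icc

variable {G : Type*} [AddCommGroup G] [Lattice G] [IsOrderedAddMonoid G]

theorem Set.Icc_zero_add_Icc_zero {a b : G} (ha : 0 ≤ a) (hb : 0 ≤ b) :
    Set.Icc 0 a + Set.Icc 0 b = Set.Icc 0 (a + b) := by
  refine (Set.Icc_add_Icc_subset 0 a 0 b).trans_eq (by rw [zero_add]) |>.antisymm ?_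
  intro x hx
  refine ⟨x ⊓ a, ⟨le_inf hx.1 ha, inf_le_right⟩, x - x ⊓ a, ⟨sub_nonneg.2 inf_le_left, ?_⟩,
    add_sub_cancel _ _⟩
  rw [sub_le_iff_le_add, add_inf]
  exact le_inf (le_add_of_nonneg_left hb) (by rw [add_comm]; exact hx.2)

theorem Set.finsetSum_Icc_zero {ι : Type*} (s : Finset ι) {a : ι → G} (ha : ∀ i, 0 ≤ a i) :
    ∑ i ∈ s, Set.Icc 0 (a i) = Set.Icc 0 (∑ i ∈ s, a i) := by
  classical
  induction s using Finset.induction_on with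
  | empty => simp [Set.singleton_zero]
  | insert i s hi ih =>
    rw [Finset.sum_insert hi, Finset.sum_insert hi, ih,
      Set.Icc_zero_add_Icc_zero (ha i) (Finset.sum_nonneg fun j _ => ha j)]

end Icc

theorem IsLowerSet.exists_minkowskiRealizable {α : Type*} [Fintype α] {Δ : Set (Finset α)}
    (hΔ : IsLowerSet Δ) : ∃ d, MinkowskiRealizable d Δ := by
  classical
  let e := Finite.equivFin Δ
  -- coordinates are the faces, the box `P v` has side `1` along `j` iff `v ∉ e.symm j`, so
  -- `1 ∈ ∑ v ∈ σ, P v` iff `σ` lies in no face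
  let c : α → Fin (Nat.card Δ) → ℝ := fun v j => if v ∈ (e.symm j : Finset α) then 0 else 1
  have hc : ∀ v, 0 ≤ c v := fun v j => by unfold c; split_ifs <;> norm_num
  have hcount : ∀ σ j, 1 ≤ ∑ v ∈ σ, c v j ↔ ¬σ ⊆ e.symm j := by
    intro σ j
    simp [c, Finset.sum_ite, Finset.not_subset, Finset.filter_nonempty_iff]
  refine ⟨Nat.card Δ, fun v => Set.Icc 0 (c v), 1, fun v => convex_Icc _ _,
    fun v => isCompact_Icc, fun v => ⟨le_rfl, hc v⟩, fun σ => ?_⟩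
  rw [Set.finsetSum_Icc_zero σ hc, Set.mem_Icc]
  simp only [zero_le_one, true_and, Pi.le_def, Pi.one_apply, Finset.sum_apply, hcount, not_forall,
    not_not]
  exact ⟨fun hσ => ⟨e ⟨σ, hσ⟩, by rw [Equiv.symm_apply_apply]⟩, fun ⟨j, hj⟩ => hΔ hj (e.symm j).2⟩

theorem MinkowskiRealizable.comap {α β : Type*} [Fintype α] [Fintype β] {d : ℕ}
    {Δ : Set (Finset β)} (h : MinkowskiRealizable d Δ) (e : α ↪ β) :
    MinkowskiRealizable d (Finset.map e ⁻¹' Δ) := by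
  obtain ⟨P, μ, hconv, hcomp, h0, hP⟩ := h
  exact ⟨P ∘ e, μ, fun i => hconv (e i), fun i => hcomp (e i), fun i => h0 (e i),
    fun σ => by rw [Set.mem_preimage, hP, Finset.sum_map]; rfl⟩

section StrictSeparators

variable {E : Type*} [NormedAddCommGroup E] [NormedSpace ℝ E]

def strictSeparators (S : Set E) (μ : E) : Set (StrongDual ℝ E) := {f | ∀ x ∈ S, f x < f μ}

variable {S T : Set E} {μ : E}

theorem convex_strictSeparators : Convex ℝ (strictSeparators S μ) := by
  intro f hf g hg a b ha hb hab x hx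
  have hfx := hf x hx
  have hgx := hg x hx
  simp only [FunLike.coe_add, FunLike.coe_smul, Pi.add_apply, Pi.smul_apply, smul_eq_mul]
  rcases ha.eq_or_lt with rfl | ha
  · rw [zero_add] at hab
    simpa [hab] using hgx
  · nlinarith [mul_le_mul_of_nonneg_left hgx.le hb]

theorem smul_mem_strictSeparators {f : StrongDual ℝ E} (hf : f ∈ strictSeparators S μ) {c : ℝ}
    (hc : 0 < c) : c • f ∈ strictSeparators S μ :=
  fun x hx => mul_lt_mul_of_pos_left (hf x hx) hc

theorem isOpen_strictSeparators (hS : IsCompact S) : IsOpen (strictSeparators S μ) := by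
  refine isOpen_iff_eventually.2 fun f hf =>
    hS.eventually_forall_of_forall_eventually fun x hx => ?_
  have hcont : Continuous fun p : StrongDual ℝ E × E => p.1 p.2 := by fun_prop
  have hcontμ : Continuous fun p : StrongDual ℝ E × E => p.1 μ := by fun_prop
  exact hcont.continuousAt.eventually_lt hcontμ.continuousAt (hf x hx)

theorem strictSeparators_anti (h : S ⊆ T) : strictSeparators T μ ⊆ strictSeparators S μ :=
  fun _ hf x hx => hf x (h hx)

theorem strictSeparators_nonempty (hconv : Convex ℝ S) (hclosed : IsClosed S) (hμ : μ ∉ S) :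
    (strictSeparators S μ).Nonempty :=
  let ⟨f, _, hS, hμ⟩ := geometric_hahn_banach_closed_point hconv hclosed hμ
  ⟨f, fun x hx => (hS x hx).trans hμ⟩

theorem disjoint_strictSeparators (h : μ + μ ∈ S + T) :
    Disjoint (strictSeparators S μ) (strictSeparators T μ) := by
  obtain ⟨x, hx, y, hy, hxy⟩ := h
  refine Set.disjoint_left.2 fun f hS hT => ?_
  have := congrArg f hxy
  simp only [map_add] at this
  linarith [hS x hx, hT y hy]

end StrictSeparators

theorem finrank_strongDual {E : Type*} [NormedAddCommGroup E] [NormedSpace ℝ E]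
    [FiniteDimensional ℝ E] : Module.finrank ℝ (StrongDual ℝ E) = Module.finrank ℝ E :=
  LinearMap.toContinuousLinearMap.finrank_eq.symm.trans Subspace.dual_finrank_eq

section Cones

variable {E : Type*} [TopologicalSpace E] [AddCommGroup E] [Module ℝ E]

theorem StrongDual.lt_zero_of_isOpen_cone [ContinuousAdd E] [ContinuousSMul ℝ E]
    {f : StrongDual ℝ E} (hf : f ≠ 0) {A : Set E} (hAo : IsOpen A)
    (hAcone : ∀ a ∈ A, ∀ c : ℝ, 0 < c → c • a ∈ A) {u : ℝ} (hu : ∀ a ∈ A, f a < u) :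
    ∀ a ∈ A, f a < 0 := by
  have hle : ∀ a ∈ A, f a ≤ 0 := by
    intro a ha
    by_contra! hpos
    have := hu _ (hAcone a ha ((|u| + 1) / f a) (by positivity))
    rw [map_smul, smul_eq_mul, div_mul_cancel₀ _ hpos.ne'] at this
    linarith [le_abs_self u]
  -- a nonzero functional is an open map, so `f '' A` lies in the interior `Iio 0` of `Iic 0`
  have hint := ((f.isOpenMap_of_ne_zero hf) A hAo).subset_interior_iff.2
    (Set.image_subset_iff.2 hle : f '' A ⊆ Set.Iic 0)
  rw [interior_Iic] at hint
  exact fun a ha => hint ⟨a, ha, rfl⟩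

theorem exists_neg_pos_of_isOpen_cone [IsTopologicalAddGroup E] [ContinuousSMul ℝ E]
    [LocallyConvexSpace ℝ E] {A B : Set E} (hAo : IsOpen A) (hBo : IsOpen B)
    (hAc : Convex ℝ A) (hBc : Convex ℝ B)
    (hAcone : ∀ a ∈ A, ∀ c : ℝ, 0 < c → c • a ∈ A) (hBcone : ∀ b ∈ B, ∀ c : ℝ, 0 < c → c • b ∈ B)
    (hAB : Disjoint A B) (hA : A.Nonempty) (hB : B.Nonempty) :
    ∃ f : StrongDual ℝ E, (∀ a ∈ A, f a < 0) ∧ ∀ b ∈ B, 0 < f b := by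
  obtain ⟨f, u, hfA, hfB⟩ := geometric_hahn_banach_open_open hAc hAo hBc hBo hAB
  have hf : f ≠ 0 := by
    rintro rfl
    obtain ⟨a, ha⟩ := hA
    obtain ⟨b, hb⟩ := hB
    simpa using (hfA a ha).trans (hfB b hb)
  refine ⟨f, f.lt_zero_of_isOpen_cone hf hAo hAcone hfA, fun b hb => ?_⟩
  have := (-f).lt_zero_of_isOpen_cone (neg_ne_zero.2 hf) hBo hBcone (u := -u)
    (fun b hb => by simpa using hfB b hb) b hb
  simpa using this

end Cones

theorem linearIndependent_of_forall_exists_sign {𝕜 X ι : Type*} [Field 𝕜] [LinearOrder 𝕜]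
    [IsStrictOrderedRing 𝕜] [AddCommGroup X] [Module 𝕜 X] [Fintype ι] {φ : ι → Module.Dual 𝕜 X}
    (h : ∀ N : Set ι, ∃ x, (∀ k ∈ N, φ k x < 0) ∧ ∀ k ∉ N, 0 < φ k x) :
    LinearIndependent 𝕜 φ := by
  refine Fintype.linearIndependent_iff.2 fun g hg => ?_
  obtain ⟨x, hneg, hpos⟩ := h {k | g k < 0}
  have hterm : ∀ k, 0 ≤ g k * φ k x ∧ (g k ≠ 0 → 0 < g k * φ k x) := by
    intro k
    by_cases hk : g k < 0
    · have := mul_pos_of_neg_of_neg hk (hneg k hk)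
      exact ⟨this.le, fun _ => this⟩
    · have hφ := hpos k hk
      rw [not_lt] at hk
      exact ⟨mul_nonneg hk hφ.le, fun hk' => mul_pos (hk.lt_of_ne' hk') hφ⟩
  have hsum : ∑ k, g k * φ k x = 0 := by
    simpa using congrArg (fun ψ : Module.Dual 𝕜 X => ψ x) hg
  intro k
  by_contra hk
  have := (Finset.sum_eq_zero_iff_of_nonneg fun k _ => (hterm k).1).1 hsum k (Finset.mem_univ k)
  exact ((hterm k).2 hk).ne' this

section TwoK₂Join

/-- The join of `ι` copies of `2K₂`: the vertex `(k, b, i)` is endpoint `i` of edge `b` in the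
`k`-th copy, and a face may use only one edge `χ k` of each copy. -/
def twoK₂Join (ι : Type*) : Set (Finset (ι × Bool × Bool)) :=
  {σ | ∃ χ : ι → Bool, ∀ v ∈ σ, v.2.1 = χ v.1}

theorem isLowerSet_twoK₂Join (ι : Type*) : IsLowerSet (twoK₂Join ι) :=
  fun _ _ hτσ ⟨χ, hχ⟩ => ⟨χ, fun v hv => hχ v (hτσ hv)⟩

theorem mem_add_of_twoK₂Join {ι E : Type*} [AddCommMonoid E] {P : ι × Bool × Bool → Set E}
    {μ : E} (hP : ∀ σ, σ ∈ twoK₂Join ι ↔ μ ∉ ∑ v ∈ σ, P v) (k : ι) (i j : Bool) :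
    μ ∈ P (k, true, i) + P (k, false, j) := by
  classical
  have hne : (k, true, i) ≠ (k, false, j) := by simp
  by_contra hμ
  obtain ⟨χ, hχ⟩ := (hP {(k, true, i), (k, false, j)}).2 (by rwa [Finset.sum_pair hne])
  have h₁ := hχ (k, true, i) (by simp)
  have h₂ := hχ (k, false, j) (by simp)
  exact Bool.noConfusion (h₁.trans h₂.symm)

variable {ι E : Type*} [NormedAddCommGroup E] [NormedSpace ℝ E] {P : ι × Bool × Bool → Set E}
  {μ : E}

theorem exists_forall_mem_strictSeparators [Fintype ι] (hconv : ∀ v, Convex ℝ (P v))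
    (hcomp : ∀ v, IsCompact (P v)) (h0 : ∀ v, (0 : E) ∈ P v)
    (hP : ∀ σ, σ ∈ twoK₂Join ι ↔ μ ∉ ∑ v ∈ σ, P v) (χ : ι → Bool) :
    ∃ f, ∀ k, f ∈ strictSeparators (P (k, χ k, false) + P (k, χ k, true)) μ := by
  classical
  let facet := Finset.univ.filter fun v : ι × Bool × Bool => v.2.1 = χ v.1
  have hμ : μ ∉ ∑ v ∈ facet, P v := (hP facet).1 ⟨χ, by simp [facet]⟩
  obtain ⟨f, hf⟩ := strictSeparators_nonempty (convex_sum _ fun v _ => hconv v)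
    (IsCompact.finsetSum _ fun v _ => hcomp v).isClosed hμ
  refine ⟨f, fun k => strictSeparators_anti ?_ hf⟩
  rw [← Finset.sum_pair (f := P) (by simp : (k, χ k, false) ≠ (k, χ k, true))]
  refine Set.finsetSum_subset_finsetSum_of_subset (fun v hv => ?_) h0
  rcases Finset.mem_insert.1 hv with rfl | hv
  · simp [facet]
  · simp [facet, Finset.mem_singleton.1 hv]

theorem card_le_finrank_of_twoK₂Join [Fintype ι] [FiniteDimensional ℝ E]
    (hconv : ∀ v, Convex ℝ (P v)) (hcomp : ∀ v, IsCompact (P v)) (h0 : ∀ v, (0 : E) ∈ P v)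
    (hP : ∀ σ, σ ∈ twoK₂Join ι ↔ μ ∉ ∑ v ∈ σ, P v) :
    Fintype.card ι ≤ Module.finrank ℝ E := by
  classical
  let Ω : ι → Bool → Set (StrongDual ℝ E) := fun k b =>
    strictSeparators (P (k, b, false) + P (k, b, true)) μ
  have hΩ := exists_forall_mem_strictSeparators hconv hcomp h0 hP
  have hsep : ∀ k, ∃ φ : StrongDual ℝ (StrongDual ℝ E),
      (∀ f ∈ Ω k true, φ f < 0) ∧ ∀ f ∈ Ω k false, 0 < φ f := fun k =>
    exists_neg_pos_of_isOpen_cone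
      (isOpen_strictSeparators ((hcomp _).add (hcomp _)))
      (isOpen_strictSeparators ((hcomp _).add (hcomp _)))
      convex_strictSeparators convex_strictSeparators
      (fun _ hf _ hc => smul_mem_strictSeparators hf hc)
      (fun _ hf _ hc => smul_mem_strictSeparators hf hc)
      (disjoint_strictSeparators (by
        simpa only [add_add_add_comm] using Set.add_mem_add
          (mem_add_of_twoK₂Join hP k false false) (mem_add_of_twoK₂Join hP k true true)))
      (let ⟨f, hf⟩ := hΩ fun _ => true; ⟨f, hf k⟩)
      (let ⟨f, hf⟩ := hΩ fun _ => false; ⟨f, hf k⟩)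
  choose φ hφneg hφpos using hsep
  have hli : LinearIndependent ℝ fun k => (φ k).toLinearMap := by
    refine linearIndependent_of_forall_exists_sign fun N => ?_
    obtain ⟨f, hf⟩ := hΩ fun k => decide (k ∈ N)
    exact ⟨f, fun k hk => hφneg k f (by simpa [hk] using hf k),
      fun k hk => hφpos k f (by simpa [hk] using hf k)⟩
  calc Fintype.card ι ≤ Module.finrank ℝ (Module.Dual ℝ (StrongDual ℝ E)) :=
        hli.fintype_card_le_finrank
    _ = Module.finrank ℝ E := by rw [Subspace.dual_finrank_eq, finrank_strongDual]

end TwoK₂Join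

theorem le_of_minkowskiRealizable_twoK₂Join {ι : Type*} [Fintype ι] {d : ℕ}
    (h : MinkowskiRealizable d (twoK₂Join ι)) : Fintype.card ι ≤ d := by
  obtain ⟨P, μ, hconv, hcomp, h0, hP⟩ := h
  simpa using card_le_finrank_of_twoK₂Join hconv hcomp h0 hP

/-- for every d ≥ 0 there is a simplicial complex whose convex
threshold dimension is at least d. -/
theorem ctd_unbounded (d : ℕ) :
    ∃ (n : ℕ) (Δ : Set (Finset (Fin n))),
      (∀ σ ∈ Δ, ∀ τ, τ ⊆ σ → τ ∈ Δ) ∧ d ≤ ctd Δ := by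
  let e := Fintype.equivFin (Fin d × Bool × Bool)
  let Δ := Finset.map e.symm.toEmbedding ⁻¹' twoK₂Join (Fin d)
  have hΔ : IsLowerSet Δ := (isLowerSet_twoK₂Join _).preimage fun _ _ => Finset.map_subset_map.2
  refine ⟨_, Δ, fun σ hσ τ hτσ => hΔ hτσ hσ, ?_⟩
  have hctd : MinkowskiRealizable (ctd Δ) Δ := Nat.sInf_mem hΔ.exists_minkowskiRealizable
  have hJ : Finset.map e.toEmbedding ⁻¹' Δ = twoK₂Join (Fin d) := by
    ext σ
    simp [Δ, Finset.map_map]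
  simpa using le_of_minkowskiRealizable_twoK₂Join (ι := Fin d) (hJ ▸ hctd.comap e.toEmbedding)
end
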